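/- The sequential sampling procedure that, for i = n down to 1, samples Z_i = 1 with probability P(Σ_{m=1}^{i-1} Z_m = j−1)·p_i / P(Σ_{m=1}^{i} Z_m = j) (where j is the number of ones remaining to be placed among Z_1,...,Z_i) produces samples distributed exactly according to the conditional distribution p(z | Σ_i z_i = k). -/

import Mathlib

open Finset

/-- Weight of an assignment `z` under independent Bernoulli variables with parameters `p`. -/
noncomputable def W {n : ℕ} (p : Fin n → ℝ) (z : Fin n → Bool) : ℝ :=
  ∏ i, if z i then p i else 1 - p i

open scoped Classical in
/-- Probability of the event `E` under independent Bernoulli variables with parameters `p`. -/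
noncomputable def Pr {n : ℕ} (p : Fin n → ℝ) (E : (Fin n → Bool) → Prop) : ℝ :=
  ∑ z : Fin n → Bool, if E z then W p z else 0

/-- Number of ones in `z`. -/
def cnt {n : ℕ} (z : Fin n → Bool) : ℕ := (Finset.univ.filter fun i => z i = true).card

/-- The number of ones remaining to be placed among `Z_1,…,Z_i` when the target vector is `z`:
`j_i = #{m ≤ i : z_m = 1}`. -/
def rem {n : ℕ} (z : Fin n → Bool) (i : Fin n) : ℕ :=
  (Finset.univ.filter fun m => m ≤ i ∧ z m = true).card

/-!
The numerator of the `i`-th sampling probability, `P(Σ_{m<i} Z_m = j_{i-1})`, is the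
denominator of the `(i-1)`-th one, so the product telescopes: what is left is the product of
the Bernoulli weights, `W p z`, divided by the last denominator `P(Σ_m Z_m = k)` (the first
numerator is the probability of the empty prefix matching, which is `1`).
-/

lemma W_pos {n : ℕ} {p : Fin n → ℝ} (hp : ∀ i, 0 < p i ∧ p i < 1) (w : Fin n → Bool) :
    0 < W p w :=
  prod_pos fun i _ => by
    cases w i
    · simpa using (hp i).2
    · simpa using (hp i).1

lemma Pr_pos {n : ℕ} {p : Fin n → ℝ} (hp : ∀ i, 0 < p i ∧ p i < 1)
    {E : (Fin n → Bool) → Prop} {z : Fin n → Bool} (hz : E z) : 0 < Pr p E := by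
  classical
  refine sum_pos' (fun w _ => ?_) ⟨z, mem_univ z, by simpa [hz] using W_pos hp z⟩
  split_ifs
  exacts [(W_pos hp w).le, le_rfl]

lemma Pr_true {n : ℕ} (p : Fin n → ℝ) : Pr p (fun _ => True) = 1 := by
  simp only [Pr, W, if_true]
  rw [← Fintype.prod_sum fun i (b : Bool) => if b then p i else 1 - p i]
  simp

lemma prod_range_div_succ_of_ne_zero {G₀ : Type*} [CommGroupWithZero G₀] {f : ℕ → G₀}
    (hf : ∀ j, f j ≠ 0) (n : ℕ) : ∏ i ∈ range n, f i / f (i + 1) = f 0 / f n := by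
  induction n with
  | zero => simp [hf 0]
  | succ n ih => rw [prod_range_succ, ih, div_mul_div_cancel₀ (hf n)]

def prefixCnt {n : ℕ} (j : ℕ) (w : Fin n → Bool) : ℕ := #{m : Fin n | m.val < j ∧ w m = true}

lemma prefixCnt_zero {n : ℕ} (w : Fin n → Bool) : prefixCnt 0 w = 0 := by
  simp [prefixCnt]

lemma prefixCnt_of_le {n j : ℕ} (hj : n ≤ j) (w : Fin n → Bool) : prefixCnt j w = cnt w := by
  unfold prefixCnt cnt
  congr 1
  exact filter_congr fun m _ => by simp [m.isLt.trans_le hj]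

lemma prefixCnt_succ {n : ℕ} (w : Fin n → Bool) (i : Fin n) :
    prefixCnt (i + 1) w = prefixCnt i w + if w i then 1 else 0 := by
  unfold prefixCnt
  split_ifs with hi
  · rw [← card_insert_of_notMem (a := i) (by simp)]
    congr 1
    ext m
    simp only [mem_insert, mem_filter, mem_univ, true_and, Fin.ext_iff]
    grind
  · rw [add_zero]
    congr 1
    ext m
    simp only [mem_filter, mem_univ, true_and]
    grind

lemma card_filter_le_eq_prefixCnt {n : ℕ} (w : Fin n → Bool) (i : Fin n) :
    #{m | m ≤ i ∧ w m = true} = prefixCnt (i + 1) w := by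
  simp only [prefixCnt, Fin.le_def, Nat.lt_succ_iff]

lemma card_filter_lt_eq_prefixCnt {n : ℕ} (w : Fin n → Bool) (i : Fin n) :
    #{m | m < i ∧ w m = true} = prefixCnt i w :=
  rfl

noncomputable def prefixCntProb {n : ℕ} (p : Fin n → ℝ) (z : Fin n → Bool) (j : ℕ) : ℝ :=
  Pr p fun w => prefixCnt j w = prefixCnt j z

lemma prefixCntProb_pos {n : ℕ} {p : Fin n → ℝ} (hp : ∀ i, 0 < p i ∧ p i < 1)
    (z : Fin n → Bool) (j : ℕ) : 0 < prefixCntProb p z j :=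
  Pr_pos hp (z := z) rfl

noncomputable def stepProb {n : ℕ} (p : Fin n → ℝ) (z : Fin n → Bool) (i : Fin n) : ℝ :=
  if z i = true then
    Pr p (fun w => #{m | m < i ∧ w m = true} = rem z i - 1) * p i /
      Pr p (fun w => #{m | m ≤ i ∧ w m = true} = rem z i)
  else
    Pr p (fun w => #{m | m < i ∧ w m = true} = rem z i) * (1 - p i) /
      Pr p (fun w => #{m | m ≤ i ∧ w m = true} = rem z i)

lemma stepProb_eq {n : ℕ} (p : Fin n → ℝ) (z : Fin n → Bool) (i : Fin n) :
    stepProb p z i =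
      prefixCntProb p z i * (if z i then p i else 1 - p i) / prefixCntProb p z (i + 1) := by
  simp only [stepProb, prefixCntProb, rem, card_filter_le_eq_prefixCnt,
    card_filter_lt_eq_prefixCnt, prefixCnt_succ z i]
  split_ifs <;> simp

/-- Correctness of sequential sampling: the product of the step-wise sampling probabilities
(`P(Σ_{m<i} Z_m = j−1)·p_i / P(Σ_{m≤i} Z_m = j)` for a one, its complement for a zero)
equals the `k`-subset conditional probability of the sampled vector `z`. -/
theorem stmt5 (n k : ℕ) (p : Fin n → ℝ) (hp : ∀ i, 0 < p i ∧ p i < 1)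
    (z : Fin n → Bool) (hz : cnt z = k) :
    (∏ i : Fin n,
      if z i = true then
        Pr p (fun w => (Finset.univ.filter fun m => m < i ∧ w m = true).card = rem z i - 1)
          * p i /
        Pr p (fun w => (Finset.univ.filter fun m => m ≤ i ∧ w m = true).card = rem z i)
      else
        Pr p (fun w => (Finset.univ.filter fun m => m < i ∧ w m = true).card = rem z i)
          * (1 - p i) /
        Pr p (fun w => (Finset.univ.filter fun m => m ≤ i ∧ w m = true).card = rem z i)) =
    W p z / Pr p (fun w => cnt w = k) := by
  set C := prefixCntProb p z
  have hC : ∀ j, C j ≠ 0 := fun j => (prefixCntProb_pos hp z j).ne'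
  have hC₀ : C 0 = 1 := by simpa [C, prefixCntProb, prefixCnt_zero] using Pr_true p
  have hCn : C n = Pr p (fun w => cnt w = k) := by
    simp only [C, prefixCntProb, prefixCnt_of_le le_rfl, hz]
  calc ∏ i, stepProb p z i
      = ∏ i : Fin n, (if z i then p i else 1 - p i) * (C i / C (i + 1)) :=
        prod_congr rfl fun i _ => by rw [stepProb_eq]; ring
    _ = W p z * (C 0 / C n) := by
        rw [prod_mul_distrib, Fin.prod_univ_eq_prod_range (fun i => C i / C (i + 1)),
          prod_range_div_succ_of_ne_zero hC, W]
    _ = W p z / Pr p (fun w => cnt w = k) := by rw [hC₀, hCn, mul_one_div]
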